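/- Set a⁺ = (−1+i)/4, a₋₁⁺ = (−1−i)/8, a₁⁺ = (−1+i)/96, and for μ > 0 and x, y ∈ ℝ define E(μ; x, y) = R₀⁺(μ⁴)(x,y) − a⁺/μ³ − (a₋₁⁺/μ)|x−y|² − |x−y|³/12 − a₁⁺ μ |x−y|⁴. Then there exists a constant C > 0 such that for all μ > 0 and all x, y ∈ ℝ: |E(μ; x, y)| ≤ C μ³ |x−y|⁶ and |∂_μ E(μ; x, y)| ≤ C μ² |x−y|⁶. -/

import Mathlib

/-- The error term `E(μ; x, y)` in the low-energy expansion of the free resolvent kernel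
`R₀⁺(μ⁴)(x,y) = (i e^{iμ|x−y|} − e^{−μ|x−y|})/(4μ³)`, with
`a⁺ = (−1+i)/4`, `a₋₁⁺ = (−1−i)/8`, `a₁⁺ = (−1+i)/96`:
`E(μ;x,y) = R₀⁺(μ⁴)(x,y) − a⁺/μ³ − (a₋₁⁺/μ)|x−y|² − |x−y|³/12 − a₁⁺ μ |x−y|⁴`. -/
noncomputable def resolventError (μ x y : ℝ) : ℂ :=
  (Complex.I * Complex.exp (Complex.I * (μ : ℂ) * ((|x - y| : ℝ) : ℂ)) -
      Complex.exp (-((μ : ℂ) * ((|x - y| : ℝ) : ℂ)))) / (4 * (μ : ℂ) ^ 3) -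
    ((-1 + Complex.I) / 4) / (μ : ℂ) ^ 3 -
    ((-1 - Complex.I) / 8) / (μ : ℂ) * ((|x - y| : ℝ) : ℂ) ^ 2 -
    ((|x - y| : ℝ) : ℂ) ^ 3 / 12 -
    ((-1 + Complex.I) / 96) * (μ : ℂ) * ((|x - y| : ℝ) : ℂ) ^ 4

/-!
Write `r = |x - y|` and `R_n(w) = e^w - ∑_{m<n} w^m/m!`. The terms subtracted in `E` are the
degree-5 Taylor polynomial of `z ↦ i e^{iz} - e^{-z}` at `z = μ r` divided by `4μ³` (its `z` and `z⁵`
coefficients vanish), so `4μ³ E(μ) = i R₆(iμr) - R₆(-μr)`. On the closed left half-plane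
`|R_n(w)| ≤ |w|^n / n!`, by induction on `n` from `d/dt R_{n+1}(t w) = w R_n(t w)`. Since
`∂_μ R₆(μ c) = c R₅(μ c)`, both estimates follow with `C = 1`.
-/

open Finset Complex
open scoped Nat

noncomputable def expRemainder (n : ℕ) (w : ℂ) : ℂ :=
  exp w - ∑ m ∈ range n, w ^ m / m !

lemma expRemainder_succ_zero (n : ℕ) : expRemainder (n + 1) 0 = 0 := by
  simp [expRemainder, sum_range_succ']

lemma hasDerivAt_expRemainder_succ (n : ℕ) (c : ℂ) (t : ℝ) :
    HasDerivAt (fun s : ℝ => expRemainder (n + 1) (s * c)) (c * expRemainder n (t * c)) t := by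
  have hlin : HasDerivAt (fun s : ℝ => (s : ℂ) * c) c t := by
    simpa using (hasDerivAt_id t).ofReal_comp.mul_const c
  have hterm (m : ℕ) : HasDerivAt (fun s : ℝ => ((s : ℂ) * c) ^ (m + 1) / (m + 1)!)
      (c * ((t * c) ^ m / m !)) t := by
    refine ((hlin.fun_pow (m + 1)).div_const _).congr_deriv ?_
    push_cast [Nat.factorial_succ, Nat.add_sub_cancel]
    field_simp
  have hsum := hlin.cexp.fun_sub ((HasDerivAt.fun_sum (u := range n) fun m _ => hterm m).add_const 1)
  have hshift : (fun s : ℝ => expRemainder (n + 1) (s * c)) =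
      fun s : ℝ => exp (s * c) - (∑ m ∈ range n, ((s : ℂ) * c) ^ (m + 1) / (m + 1)! + 1) := by
    funext s
    simp [expRemainder, sum_range_succ']
  rw [hshift]
  refine hsum.congr_deriv ?_
  simp only [expRemainder, mul_sub, mul_sum, mul_comm]

lemma norm_expRemainder_le (n : ℕ) {w : ℂ} (hw : w.re ≤ 0) :
    ‖expRemainder n w‖ ≤ ‖w‖ ^ n / n ! := by
  induction n generalizing w with
  | zero => simpa [expRemainder, norm_exp] using hw
  | succ n ih =>
    have hB (t : ℝ) : HasDerivAt (fun s : ℝ => (s * ‖w‖) ^ (n + 1) / (n + 1)!)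
        (‖w‖ * ((t * ‖w‖) ^ n / n !)) t := by
      refine (((hasDerivAt_mul_const ‖w‖).fun_pow (n + 1)).div_const _).congr_deriv ?_
      push_cast [Nat.factorial_succ, Nat.add_sub_cancel]
      field_simp
    have key := image_norm_le_of_norm_deriv_right_le_deriv_boundary (a := 0) (b := 1)
      (fun t _ => (hasDerivAt_expRemainder_succ n w t).continuousAt.continuousWithinAt)
      (fun t _ => (hasDerivAt_expRemainder_succ n w t).hasDerivWithinAt)
      (by simp [expRemainder_succ_zero]) hB (fun t ht => ?_) (Set.right_mem_Icc.2 zero_le_one)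
    · simpa using key
    · have ht0 : 0 ≤ t := ht.1
      have hre : ((t : ℂ) * w).re ≤ 0 := by simpa using mul_nonpos_of_nonneg_of_nonpos ht0 hw
      rw [norm_mul]
      gcongr
      simpa [norm_mul, abs_of_nonneg ht0] using ih hre

lemma norm_expRemainder_mul_le (n : ℕ) {c : ℂ} (hc : c.re ≤ 0) {μ : ℝ} (hμ : 0 ≤ μ) :
    ‖expRemainder n (μ * c)‖ ≤ (μ * ‖c‖) ^ n / n ! := by
  have hre : ((μ : ℂ) * c).re ≤ 0 := by simpa using mul_nonpos_of_nonneg_of_nonpos hμ hc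
  simpa [norm_mul, abs_of_nonneg hμ] using norm_expRemainder_le n hre

noncomputable def resolventErrorNumerator (r μ : ℝ) : ℂ :=
  I * expRemainder 6 (μ * (I * r)) - expRemainder 6 (μ * -(r : ℂ))

lemma resolventError_eq_div (x y : ℝ) {μ : ℝ} (hμ : μ ≠ 0) :
    resolventError μ x y = resolventErrorNumerator |x - y| μ / (4 * μ ^ 3) := by
  have hμc : (μ : ℂ) ≠ 0 := by exact_mod_cast hμ
  have hI5 : I ^ 5 = I := by rw [pow_succ, I_pow_four, one_mul]
  simp only [resolventError, resolventErrorNumerator, expRemainder, sum_range_succ, sum_range_zero,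
    mul_pow, I_sq, I_pow_three, I_pow_four, hI5]
  field_simp
  ring_nf
  rw [I_sq]
  ring

lemma hasDerivAt_resolventErrorNumerator (r μ : ℝ) :
    HasDerivAt (resolventErrorNumerator r)
      (r * (expRemainder 5 (μ * -(r : ℂ)) - expRemainder 5 (μ * (I * r)))) μ := by
  refine (((hasDerivAt_expRemainder_succ 5 (I * r) μ).const_mul I).sub
    (hasDerivAt_expRemainder_succ 5 (-(r : ℂ)) μ)).congr_deriv ?_
  ring_nf
  rw [I_sq]
  ring

lemma norm_resolventErrorNumerator_le {r μ : ℝ} (hr : 0 ≤ r) (hμ : 0 ≤ μ) :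
    ‖resolventErrorNumerator r μ‖ ≤ (μ * r) ^ 6 / 360 := by
  have hosc := norm_expRemainder_mul_le 6 (c := I * r) (by simp) hμ
  have hdecay := norm_expRemainder_mul_le 6 (c := -(r : ℂ)) (by simpa using hr) hμ
  simp only [norm_mul, norm_neg, norm_I, one_mul, norm_real, Real.norm_of_nonneg hr] at hosc hdecay
  calc ‖resolventErrorNumerator r μ‖
      ≤ ‖I * expRemainder 6 (μ * (I * r))‖ + ‖expRemainder 6 (μ * -(r : ℂ))‖ := norm_sub_le _ _
    _ ≤ (μ * r) ^ 6 / 6 ! + (μ * r) ^ 6 / 6 ! := by rw [norm_mul, norm_I, one_mul]; gcongr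
    _ = (μ * r) ^ 6 / 360 := by norm_num [Nat.factorial]; ring

lemma norm_deriv_resolventErrorNumerator_le {r μ : ℝ} (hr : 0 ≤ r) (hμ : 0 ≤ μ) :
    ‖deriv (resolventErrorNumerator r) μ‖ ≤ r * (μ * r) ^ 5 / 60 := by
  have hosc := norm_expRemainder_mul_le 5 (c := I * r) (by simp) hμ
  have hdecay := norm_expRemainder_mul_le 5 (c := -(r : ℂ)) (by simpa using hr) hμ
  simp only [norm_mul, norm_neg, norm_I, one_mul, norm_real, Real.norm_of_nonneg hr] at hosc hdecay
  rw [(hasDerivAt_resolventErrorNumerator r μ).deriv, norm_mul, norm_real, Real.norm_of_nonneg hr,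
    mul_div_assoc]
  gcongr
  calc _ ≤ ‖expRemainder 5 (μ * -(r : ℂ))‖ + ‖expRemainder 5 (μ * (I * r))‖ := norm_sub_le _ _
    _ ≤ (μ * r) ^ 5 / 5 ! + (μ * r) ^ 5 / 5 ! := by gcongr
    _ = (μ * r) ^ 5 / 60 := by norm_num [Nat.factorial]; ring

lemma norm_four_mul_ofReal_pow_three {μ : ℝ} (hμ : 0 ≤ μ) : ‖4 * (μ : ℂ) ^ 3‖ = 4 * μ ^ 3 := by
  simp [Real.norm_of_nonneg hμ]

lemma norm_resolventError_le (x y : ℝ) {μ : ℝ} (hμ : 0 < μ) :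
    ‖resolventError μ x y‖ ≤ μ ^ 3 * |x - y| ^ 6 / 1440 := by
  rw [resolventError_eq_div x y hμ.ne', norm_div, norm_four_mul_ofReal_pow_three hμ.le,
    div_le_iff₀ (by positivity)]
  calc _ ≤ (μ * |x - y|) ^ 6 / 360 := norm_resolventErrorNumerator_le (abs_nonneg _) hμ.le
    _ = _ := by ring

lemma HasDerivAt.div_four_mul_cube {f : ℝ → ℂ} {f' : ℂ} {μ : ℝ} (hf : HasDerivAt f f' μ)
    (hμ : μ ≠ 0) :
    HasDerivAt (fun t => f t / (4 * (t : ℂ) ^ 3)) ((f' - 3 * f μ / μ) / (4 * μ ^ 3)) μ := by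
  have hμc : (μ : ℂ) ≠ 0 := by exact_mod_cast hμ
  have hcube : HasDerivAt (fun t : ℝ => 4 * (t : ℂ) ^ 3) (4 * (3 * (μ : ℂ) ^ 2)) μ := by
    simpa using ((hasDerivAt_pow 3 (μ : ℂ)).comp_ofReal).const_mul 4
  refine (hf.div hcube (by simp [hμc])).congr_deriv ?_
  field_simp

lemma norm_deriv_resolventError_le (x y : ℝ) {μ : ℝ} (hμ : 0 < μ) :
    ‖deriv (fun μ' : ℝ => resolventError μ' x y) μ‖ ≤ μ ^ 2 * |x - y| ^ 6 / 160 := by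
  have hr : 0 ≤ |x - y| := abs_nonneg _
  have hE : HasDerivAt (fun μ' : ℝ => resolventError μ' x y) _ μ :=
    ((hasDerivAt_resolventErrorNumerator |x - y| μ).differentiableAt.hasDerivAt.div_four_mul_cube
      hμ.ne').congr_of_eventuallyEq <| by
      filter_upwards [eventually_ne_nhds hμ.ne'] with t ht
      exact resolventError_eq_div x y ht
  have hN := norm_resolventErrorNumerator_le hr hμ.le
  have hN' := norm_deriv_resolventErrorNumerator_le hr hμ.le
  rw [hE.deriv, norm_div, norm_four_mul_ofReal_pow_three hμ.le, div_le_iff₀ (by positivity)]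
  refine (norm_sub_le _ _).trans ?_
  rw [norm_div, norm_mul (3 : ℂ), norm_real, Real.norm_of_nonneg hμ.le]
  calc _ ≤ |x - y| * (μ * |x - y|) ^ 5 / 60 + 3 * ((μ * |x - y|) ^ 6 / 360) / μ := by
        gcongr
        norm_num
    _ = _ := by field_simp; ring

/-- pointwise bounds for the error term in the low-energy expansion
of the free resolvent: `|E(μ;x,y)| ≤ C μ³ |x−y|⁶` and `|∂_μ E(μ;x,y)| ≤ C μ² |x−y|⁶`
for all `μ > 0` and `x, y ∈ ℝ`. -/
theorem stmt11 :
    ∃ C : ℝ, 0 < C ∧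
      ∀ μ : ℝ, 0 < μ → ∀ x y : ℝ,
        ‖resolventError μ x y‖ ≤ C * μ ^ 3 * |x - y| ^ 6 ∧
        ‖deriv (fun μ' : ℝ => resolventError μ' x y) μ‖ ≤ C * μ ^ 2 * |x - y| ^ 6 := by
  refine ⟨1, one_pos, fun μ hμ x y => ⟨?_, ?_⟩⟩
  · have h := norm_resolventError_le x y hμ
    have : 0 ≤ μ ^ 3 * |x - y| ^ 6 := by positivity
    linarith
  · have h := norm_deriv_resolventError_le x y hμ
    have : 0 ≤ μ ^ 2 * |x - y| ^ 6 := by positivity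
    linarith
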